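/- arXiv:2309.16104 — 6 statements merged into one kernel-verified Lean document; each statement's English description precedes it below -/
import Mathlib

section
/- Let Y^rep be the generalized repetition code of length L (L odd) with Δ branches, 2 ≤ Δ. For every f̂0 ∈ F2^{Y(0)} there exists f0 ∈ f̂0 + {0, 𝟙} such that: (1) |f0| ≤ |f̂0|; (2) (2/L)·|f0| ≤ |δ0 f̂0|_int, where |·|_int counts violated interior checks; (3) |δ0 f0|_∂ ≤ |δ0 f̂0|_int, where |δ0 f0|_∂ counts the boundary leaves at which f0 is nonzero. That is, Y^rep is a (β0 = 2/L, η0 = 1)-coboundary expander at level 0. -/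
/-!
Adding `𝟙` changes no interior check, so take for `f0` the lighter of `f̂0` and `f̂0 + 𝟙`.
A branch without violated checks is constant, equal to the root value `r`; hence `f0` differs
from the constant `r` only on the branches carrying a violation, and minimality gives
`|f0| ≤ (L - 1)/2 · |δ0 f0|_int`. For the boundary: if `r = 0`, every nonzero leaf sits on a
branch with a violation. If `r = 1`, minimality forces more than half of the branches to carry
a violation. Along a branch the number of violations has the parity of `[leaf ≠ root]`, so a
violated branch with leaf `1` carries at least two, which pays for the leaves of the constant
branches.
-/

/-- Vertex set of the generalized repetition code with `Δ` branches, each branch a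
path of `n+1` vertices attached to a common root (`none`); length `L = 2*n+3` (odd),
each branch carrying `(L-1)/2 = n+1` bits. -/
abbrev RepV (Δ n : ℕ) := Option (Fin Δ × Fin (n + 1))

/-- The neighbour of the bit `(b,j)` that is closer to the root: the root for `j = 0`,
otherwise `(b, j-1)`.  Each interior check (one per edge) compares `some (b,j)` with
`repPrev (b,j)`. -/
def repPrev {Δ n : ℕ} (e : Fin Δ × Fin (n + 1)) : RepV Δ n :=
  if h : (e.2 : ℕ) = 0 then none else some (e.1, ⟨(e.2 : ℕ) - 1, by omega⟩)

/-- `|δ0 f|_int`: the number of violated interior checks of `f`. -/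
def repInt {Δ n : ℕ} (f : RepV Δ n → ZMod 2) : ℕ :=
  (Finset.univ.filter (fun e : Fin Δ × Fin (n + 1) => f (some e) ≠ f (repPrev e))).card

/-- `|δ0 f|_∂`: the number of boundary leaves at which `f` is nonzero. -/
def repBd {Δ n : ℕ} (f : RepV Δ n → ZMod 2) : ℕ :=
  (Finset.univ.filter (fun b : Fin Δ => f (some (b, Fin.last n)) ≠ 0)).card

open Finset

theorem Fin.sum_univ_succ_sub_castSucc {G : Type*} [AddCommGroup G] :
    ∀ {m : ℕ} (p : Fin (m + 1) → G),
      ∑ i : Fin m, (p i.succ - p i.castSucc) = p (last m) - p 0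
  | 0, p => by simp
  | m + 1, p => by
    rw [Fin.sum_univ_castSucc]
    simp only [succ_castSucc]
    rw [Fin.sum_univ_succ_sub_castSucc fun i => p i.castSucc]
    simp only [succ_last, castSucc_zero]
    abel

section Path

variable {α : Type*} [DecidableEq α] {m : ℕ}

def pathCuts (p : Fin (m + 1) → α) : Finset (Fin m) :=
  univ.filter fun i => p i.succ ≠ p i.castSucc

theorem pathCuts_nonempty_iff (p : Fin (m + 1) → α) :
    (pathCuts p).Nonempty ↔ ∃ i, p i ≠ p 0 := by
  rw [← not_iff_not, not_nonempty_iff_eq_empty, pathCuts, filter_eq_empty_iff]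
  push Not
  constructor
  · intro h i
    induction i using Fin.induction with
    | zero => rfl
    | succ i ih => rw [h (mem_univ i), ih]
  · intro h i _
    rw [h, h i.castSucc]

theorem natCast_card_pathCuts (p : Fin (m + 1) → ZMod 2) :
    (#(pathCuts p) : ZMod 2) = p (Fin.last m) - p 0 := by
  have hbit : ∀ a b : ZMod 2, (if a ≠ b then 1 else 0) = a - b := by decide
  rw [pathCuts, card_filter, Nat.cast_sum, ← Fin.sum_univ_succ_sub_castSucc]
  push_cast
  exact sum_congr rfl fun i _ => hbit _ _

theorem two_le_card_pathCuts {p : Fin (m + 1) → ZMod 2} (hne : (pathCuts p).Nonempty)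
    (hlast : p (Fin.last m) = p 0) : 2 ≤ #(pathCuts p) := by
  have heven : 2 ∣ #(pathCuts p) := by
    rw [← ZMod.natCast_eq_zero_iff, natCast_card_pathCuts, hlast, sub_self]
  have := hne.card_pos
  omega

end Path

section CosetRep

variable {ι : Type*} [Fintype ι]

theorem hammingNorm_add_const (f : ι → ZMod 2) (c : ZMod 2) :
    hammingNorm (f + fun _ => c) = hammingDist f fun _ => c := by
  rw [hammingDist_eq_hammingNorm]
  congr 1
  ext i
  exact congrArg (· + c) (CharTwo.neg_eq (f i)).symm

theorem hammingNorm_add_hammingNorm_add_one (f : ι → ZMod 2) :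
    hammingNorm f + hammingNorm (f + fun _ => 1) = Fintype.card ι := by
  have hflip : ∀ a : ZMod 2, a + 1 ≠ 0 ↔ ¬a ≠ 0 := by decide
  simp only [hammingNorm, Pi.add_apply]
  rw [filter_congr fun i _ => hflip (f i), card_filter_add_card_filter_not, card_univ]

theorem hammingNorm_le_hammingDist_const {f : ι → ZMod 2}
    (hmin : hammingNorm f ≤ hammingNorm (f + fun _ => 1)) (c : ZMod 2) :
    hammingNorm f ≤ hammingDist f fun _ => c := by
  fin_cases c
  · exact (hammingDist_zero_right f).ge
  · exact hmin.trans_eq (hammingNorm_add_const f 1)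

theorem exists_coset_rep_hammingNorm_le (f : ι → ZMod 2) :
    ∃ f₀ : ι → ZMod 2, (f₀ = f ∨ f₀ = f + fun _ => 1) ∧
      hammingNorm f₀ ≤ hammingNorm f ∧
      hammingNorm f₀ ≤ hammingNorm (f₀ + fun _ => 1) := by
  by_cases h : hammingNorm f ≤ hammingNorm (f + fun _ => 1)
  · exact ⟨f, .inl rfl, le_rfl, h⟩
  · have hinv : (f + fun _ => 1) + (fun _ => 1) = f := by
      ext i; simp [add_assoc, CharTwo.add_self_eq_zero]
    refine ⟨f + fun _ => 1, .inr rfl, by omega, ?_⟩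
    rw [hinv]
    omega

end CosetRep

section RepetitionCode

variable {Δ n : ℕ}

def repBranch (f : RepV Δ n → ZMod 2) (b : Fin Δ) : Fin (n + 2) → ZMod 2 :=
  Fin.cons (f none) fun j => f (some (b, j))

theorem repBranch_castSucc (f : RepV Δ n → ZMod 2) (b : Fin Δ) (j : Fin (n + 1)) :
    repBranch f b j.castSucc = f (repPrev (b, j)) := by
  cases j using Fin.cases with
  | zero => simp [repBranch, repPrev]
  | succ j => simp [repBranch, repPrev]; rfl

theorem repInt_eq_sum (f : RepV Δ n → ZMod 2) :
    repInt f = ∑ b, #(pathCuts (repBranch f b)) := by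
  rw [repInt, card_filter, Fintype.sum_prod_type]
  refine sum_congr rfl fun b _ => ?_
  rw [pathCuts, card_filter]
  refine sum_congr rfl fun j _ => ?_
  rw [repBranch_castSucc]
  rfl

theorem repInt_add_const (f : RepV Δ n → ZMod 2) (c : ZMod 2) :
    repInt (f + fun _ => c) = repInt f := by
  simp [repInt]

def repNonconstBranches (f : RepV Δ n → ZMod 2) : Finset (Fin Δ) :=
  univ.filter fun b => (pathCuts (repBranch f b)).Nonempty

theorem card_repNonconstBranches_le_repInt (f : RepV Δ n → ZMod 2) :
    #(repNonconstBranches f) ≤ repInt f := by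
  rw [repNonconstBranches, card_filter, repInt_eq_sum]
  gcongr with b
  split_ifs with h
  exacts [h.card_pos, Nat.zero_le _]

theorem hammingDist_const_root_le (f : RepV Δ n → ZMod 2) :
    hammingDist f (fun _ => f none) ≤ (n + 1) * #(repNonconstBranches f) := by
  calc hammingDist f (fun _ => f none)
      ≤ #((repNonconstBranches f ×ˢ (univ : Finset (Fin (n + 1)))).map .some) := by
        refine card_le_card fun v hv => ?_
        rw [mem_filter] at hv
        rcases v with _ | ⟨b, j⟩
        · exact absurd rfl hv.2
        · simp only [mem_map, mem_product, mem_univ, and_true, repNonconstBranches, mem_filter]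
          exact ⟨(b, j), ⟨trivial, (pathCuts_nonempty_iff _).2 ⟨j.succ, hv.2⟩⟩, rfl⟩
    _ = (n + 1) * #(repNonconstBranches f) := by
        rw [card_map, card_product, card_univ, Fintype.card_fin, mul_comm]

theorem repBranch_last (f : RepV Δ n → ZMod 2) (b : Fin Δ) :
    repBranch f b (Fin.last (n + 1)) = f (some (b, Fin.last n)) := by
  rw [← Fin.succ_last]
  rfl

variable {f : RepV Δ n → ZMod 2}

theorem hammingNorm_le_mul_repInt (hmin : hammingNorm f ≤ hammingNorm (f + fun _ => 1)) :
    hammingNorm f ≤ (n + 1) * repInt f :=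
  calc hammingNorm f ≤ hammingDist f (fun _ => f none) := hammingNorm_le_hammingDist_const hmin _
    _ ≤ (n + 1) * #(repNonconstBranches f) := hammingDist_const_root_le f
    _ ≤ (n + 1) * repInt f := Nat.mul_le_mul_left _ (card_repNonconstBranches_le_repInt f)

theorem lt_two_mul_card_repNonconstBranches
    (hmin : hammingNorm f ≤ hammingNorm (f + fun _ => 1)) (hroot : f none = 1) :
    Δ < 2 * #(repNonconstBranches f) := by
  have hsplit := hammingNorm_add_hammingNorm_add_one f
  have hflip : hammingNorm (f + fun _ => 1) ≤ (n + 1) * #(repNonconstBranches f) := by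
    rw [hammingNorm_add_const, ← hroot]
    exact hammingDist_const_root_le f
  rw [Fintype.card_option, Fintype.card_prod, Fintype.card_fin, Fintype.card_fin] at hsplit
  refine Nat.lt_of_mul_lt_mul_left (a := n + 1) ?_
  rw [mul_left_comm, mul_comm]
  omega

theorem repBd_le_repInt_of_root_eq_zero (hroot : f none = 0) : repBd f ≤ repInt f := by
  rw [repBd, card_filter, repInt_eq_sum]
  gcongr with b
  split_ifs with hleaf
  · refine ((pathCuts_nonempty_iff _).2 ⟨Fin.last _, ?_⟩).card_pos
    rwa [repBranch_last, show repBranch f b 0 = 0 from hroot]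
  · exact Nat.zero_le _

theorem repBd_add_two_mul_card_le (hroot : f none = 1) :
    repBd f + 2 * #(repNonconstBranches f) ≤ repInt f + Δ := by
  have hbranch : ∀ b, (if f (some (b, Fin.last n)) ≠ 0 then 1 else 0) +
      2 * (if (pathCuts (repBranch f b)).Nonempty then 1 else 0) ≤
        #(pathCuts (repBranch f b)) + 1 := by
    intro b
    split_ifs with hleaf hne hne
    · have hlast : repBranch f b (Fin.last _) = repBranch f b 0 := by
        rw [repBranch_last, show repBranch f b 0 = 1 from hroot]
        exact (by decide : ∀ c : ZMod 2, c ≠ 0 → c = 1) _ hleaf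
      have := two_le_card_pathCuts hne hlast
      omega
    · omega
    · have := hne.card_pos
      omega
    · omega
  have hk : ∑ b, (if (pathCuts (repBranch f b)).Nonempty then 1 else 0) =
      #(repNonconstBranches f) := (card_filter _ _).symm
  have hsum := sum_le_sum fun b (_ : b ∈ univ) => hbranch b
  rwa [sum_add_distrib, sum_add_distrib, ← mul_sum, hk, ← card_filter, ← repBd,
    ← repInt_eq_sum, sum_const, card_univ, Fintype.card_fin, smul_eq_mul, mul_one] at hsum

theorem repBd_le_repInt (hmin : hammingNorm f ≤ hammingNorm (f + fun _ => 1)) :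
    repBd f ≤ repInt f := by
  rcases (by decide : ∀ c : ZMod 2, c = 0 ∨ c = 1) (f none) with hroot | hroot
  · exact repBd_le_repInt_of_root_eq_zero hroot
  · have := repBd_add_two_mul_card_le hroot
    have := lt_two_mul_card_repNonconstBranches hmin hroot
    omega

end RepetitionCode

theorem stmt_4_general (Δ n : ℕ) (L : ℕ) (hL : L = 2 * n + 3)
    (fhat0 : RepV Δ n → ZMod 2) :
    ∃ f0 : RepV Δ n → ZMod 2,
      (f0 = fhat0 ∨ f0 = fhat0 + fun _ => 1) ∧
      hammingNorm f0 ≤ hammingNorm fhat0 ∧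
      (2 / (L : ℝ)) * (hammingNorm f0 : ℝ) ≤ (repInt fhat0 : ℝ) ∧
      (repBd f0 : ℝ) ≤ (repInt fhat0 : ℝ) := by
  obtain ⟨f0, hcoset, hle, hmin⟩ := exists_coset_rep_hammingNorm_le fhat0
  have hint : repInt f0 = repInt fhat0 := by
    rcases hcoset with rfl | rfl
    exacts [rfl, repInt_add_const _ _]
  refine ⟨f0, hcoset, hle, ?_, by exact_mod_cast hint ▸ repBd_le_repInt hmin⟩
  have hnorm : 2 * hammingNorm f0 ≤ L * repInt f0 := by
    have := hammingNorm_le_mul_repInt hmin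
    subst hL
    nlinarith
  rw [← hint, div_mul_eq_mul_div, div_le_iff₀ (by subst hL; positivity), mul_comm _ (L : ℝ)]
  exact_mod_cast hnorm

/-- The generalized repetition code of length L (odd) with Δ ≥ 2 branches
is a (β0 = 2/L, η0 = 1)-coboundary expander at level 0: for every fhat0 there is
f0 ∈ fhat0 + {0,𝟙} with |f0| ≤ |fhat0|, (2/L)|f0| ≤ |δ0 fhat0|_int, and |δ0 f0|_∂ ≤ |δ0 fhat0|_int. -/
theorem stmt_4 (Δ n : ℕ) (hΔ : 2 ≤ Δ) (L : ℕ) (hL : L = 2 * n + 3)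
    (fhat0 : RepV Δ n → ZMod 2) :
    ∃ f0 : RepV Δ n → ZMod 2,
      (f0 = fhat0 ∨ f0 = fhat0 + fun _ => 1) ∧
      hammingNorm f0 ≤ hammingNorm fhat0 ∧
      (2 / (L : ℝ)) * (hammingNorm f0 : ℝ) ≤ (repInt fhat0 : ℝ) ∧
      (repBd f0 : ℝ) ≤ (repInt fhat0 : ℝ) :=
  stmt_4_general Δ n L hL fhat0
end

section
/- Let G1 = (V1, E1, V1^∂) and G2 = (V2, E2, V2^∂) be finite graphs with boundary vertex sets, each satisfying the (C, C^∂)-functional inequalities: for all h: V_i → {0,1}, (i) Σ_{{x,y}∈E_i} |h(x)−h(y)| ≥ (C/|V_i|) Σ_{x,y∈V_i} |h(x)−h(y)|, and (ii) Σ_{{x,y}∈E_i} |h(x)−h(y)| ≥ (C^∂/|V_i^∂|) Σ_{x∈V_i^∂, y∈V_i} |h(x)−h(y)|. Then the Cartesian product graph G1 × G2, with boundary multiset V^∂ = (V1^∂ × V2) ⊔ (V1 × V2^∂), satisfies the (C, min(C, C^∂))-functional inequalities. -/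
open scoped Classical

/-- Sum over the (unordered) edges of `G` of `|h x − h y|`, written as half the sum
over ordered adjacent pairs. -/
noncomputable def edgeSum {V : Type} [Fintype V] (G : SimpleGraph V) (h : V → ℝ) : ℝ :=
  (1 / 2) * ∑ x : V, ∑ y : V, if G.Adj x y then |h x - h y| else 0

/-- `(C, C∂)`-functional inequalities for a graph with boundary vertex set `B`,
quantified over all `{0,1}`-valued functions. -/
def FunIneq {V : Type} [Fintype V] (G : SimpleGraph V) (B : Finset V)
    (C Cb : ℝ) : Prop :=
  ∀ h : V → ℝ, (∀ v, h v = 0 ∨ h v = 1) →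
    (C / (Fintype.card V : ℝ)) * (∑ x : V, ∑ y : V, |h x - h y|) ≤ edgeSum G h ∧
    (Cb / (B.card : ℝ)) * (∑ x ∈ B, ∑ y : V, |h x - h y|) ≤ edgeSum G h

lemma edgeSum_nonneg {V : Type} [Fintype V] (G : SimpleGraph V) (h : V → ℝ) :
    0 ≤ edgeSum G h := by
  unfold edgeSum
  apply mul_nonneg (by norm_num)
  refine Finset.sum_nonneg fun x _ => Finset.sum_nonneg fun y _ => ?_
  split_ifs <;> positivity

lemma box_edgeSum {V1 V2 : Type} [Fintype V1] [Fintype V2]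
    (G1 : SimpleGraph V1) (G2 : SimpleGraph V2) (h : V1 × V2 → ℝ) :
    edgeSum (G1 □ G2) h
      = (∑ b : V2, edgeSum G1 (fun a => h (a, b)))
        + (∑ a : V1, edgeSum G2 (fun b => h (a, b))) := by
  unfold edgeSum
  rw [← Finset.mul_sum, ← Finset.mul_sum, ← mul_add]
  congr 1
  simp only [Fintype.sum_prod_type]
  have key : ∀ (x1 y1 : V1) (x2 y2 : V2),
      (if (G1 □ G2).Adj (x1, x2) (y1, y2) then |h (x1, x2) - h (y1, y2)| else 0)
      = (if x2 = y2 then (if G1.Adj x1 y1 then |h (x1, x2) - h (y1, y2)| else 0) else 0)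
      + (if x1 = y1 then (if G2.Adj x2 y2 then |h (x1, x2) - h (y1, y2)| else 0) else 0) := by
    intro x1 y1 x2 y2
    by_cases h1 : G1.Adj x1 y1 <;> by_cases h2 : G2.Adj x2 y2 <;>
      by_cases e1 : x1 = y1 <;> by_cases e2 : x2 = y2 <;>
      simp_all [SimpleGraph.boxProd_adj]
  simp only [key, Finset.sum_add_distrib]
  congr 1
  · rw [Finset.sum_comm]
    refine Finset.sum_congr rfl fun x2 _ => Finset.sum_congr rfl fun x1 _ =>
      Finset.sum_congr rfl fun y1 _ => ?_
    simp [Finset.sum_ite_eq]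
  · refine Finset.sum_congr rfl fun x1 _ => Finset.sum_congr rfl fun x2 _ => ?_
    rw [Finset.sum_comm]
    refine Finset.sum_congr rfl fun y2 _ => ?_
    simp [Finset.sum_ite_eq]

lemma tri {V1 V2 : Type} [Fintype V1] [Fintype V2] (s : Finset V1) (h : V1 × V2 → ℝ) :
    ∑ x1 ∈ s, ∑ x2 : V2, ∑ y : V1 × V2, |h (x1, x2) - h y| ≤
      (Fintype.card V2 : ℝ) * ∑ b : V2, ∑ x1 ∈ s, ∑ y1 : V1, |h (x1, b) - h (y1, b)|
      + (s.card : ℝ) * ∑ a : V1, ∑ x2 : V2, ∑ y2 : V2, |h (a, x2) - h (a, y2)| := by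
  calc ∑ x1 ∈ s, ∑ x2 : V2, ∑ y : V1 × V2, |h (x1, x2) - h y|
      = ∑ x1 ∈ s, ∑ x2 : V2, ∑ y1 : V1, ∑ y2 : V2, |h (x1, x2) - h (y1, y2)| := by
        simp only [Fintype.sum_prod_type]
    _ ≤ ∑ x1 ∈ s, ∑ x2 : V2, ∑ y1 : V1, ∑ y2 : V2,
          (|h (x1, x2) - h (y1, x2)| + |h (y1, x2) - h (y1, y2)|) := by
        refine Finset.sum_le_sum fun x1 _ => Finset.sum_le_sum fun x2 _ =>
          Finset.sum_le_sum fun y1 _ => Finset.sum_le_sum fun y2 _ => abs_sub_le _ _ _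
    _ = (∑ x1 ∈ s, ∑ x2 : V2, ∑ y1 : V1, ∑ y2 : V2, |h (x1, x2) - h (y1, x2)|)
        + ∑ x1 ∈ s, ∑ x2 : V2, ∑ y1 : V1, ∑ y2 : V2, |h (y1, x2) - h (y1, y2)| := by
        simp only [Finset.sum_add_distrib]
    _ = (Fintype.card V2 : ℝ) * ∑ b : V2, ∑ x1 ∈ s, ∑ y1 : V1, |h (x1, b) - h (y1, b)|
        + (s.card : ℝ) * ∑ a : V1, ∑ x2 : V2, ∑ y2 : V2, |h (a, x2) - h (a, y2)| := by
        congr 1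
        · rw [Finset.sum_comm, Finset.mul_sum]
          refine Finset.sum_congr rfl fun x2 _ => ?_
          rw [Finset.mul_sum]
          refine Finset.sum_congr rfl fun x1 _ => ?_
          rw [Finset.mul_sum]
          refine Finset.sum_congr rfl fun y1 _ => ?_
          simp [Finset.sum_const, Finset.card_univ, nsmul_eq_mul]
        · rw [Finset.sum_const, nsmul_eq_mul, Finset.sum_comm]

lemma funIneq_mul {V : Type} [Fintype V] {G : SimpleGraph V} {B : Finset V} {C Cb : ℝ}
    (H : FunIneq G B C Cb) (h : V → ℝ) (hb : ∀ v, h v = 0 ∨ h v = 1) :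
    C * (∑ x : V, ∑ y : V, |h x - h y|) ≤ (Fintype.card V : ℝ) * edgeSum G h ∧
    Cb * (∑ x ∈ B, ∑ y : V, |h x - h y|) ≤ (B.card : ℝ) * edgeSum G h := by
  obtain ⟨i1, i2⟩ := H h hb
  constructor
  · rcases Nat.eq_zero_or_pos (Fintype.card V) with hc | hc
    · haveI := Fintype.card_eq_zero_iff.mp hc
      simp [hc]
    · have hn : (0 : ℝ) < (Fintype.card V : ℝ) := by exact_mod_cast hc
      rw [div_mul_eq_mul_div, div_le_iff₀ hn] at i1
      linarith
  · rcases Nat.eq_zero_or_pos B.card with hc | hc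
    · rw [Finset.card_eq_zero] at hc
      simp [hc]
    · have hn : (0 : ℝ) < (B.card : ℝ) := by exact_mod_cast hc
      rw [div_mul_eq_mul_div, div_le_iff₀ hn] at i2
      linarith

lemma coeff_div {c t d e : ℝ} (hd : 0 ≤ d) (he : 0 ≤ e) (h : c * t ≤ d * e) :
    c / d * t ≤ e := by
  rcases eq_or_lt_of_le hd with h0 | h0
  · rw [← h0, div_zero, zero_mul]; exact he
  · rw [div_mul_eq_mul_div, div_le_iff₀ h0]
    nlinarith

/-- If G1 and G2 both satisfy the (C, C∂)-functional inequalities, then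
their Cartesian (box) product, with boundary multiset (V1∂ × V2) ⊔ (V1 × V2∂),
satisfies the (C, min(C, C∂))-functional inequalities. -/
theorem stmt_5 {V1 V2 : Type} [Fintype V1] [Fintype V2]
    (G1 : SimpleGraph V1) (G2 : SimpleGraph V2)
    (B1 : Finset V1) (B2 : Finset V2) (C Cb : ℝ)
    (h1 : FunIneq G1 B1 C Cb) (h2 : FunIneq G2 B2 C Cb) :
    ∀ h : V1 × V2 → ℝ, (∀ v, h v = 0 ∨ h v = 1) →
      (C / (Fintype.card (V1 × V2) : ℝ)) *
          (∑ x : V1 × V2, ∑ y : V1 × V2, |h x - h y|) ≤ edgeSum (G1 □ G2) h ∧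
      (min C Cb / ((B1.card * Fintype.card V2 + Fintype.card V1 * B2.card : ℕ) : ℝ)) *
          ((∑ x1 ∈ B1, ∑ x2 : V2, ∑ y : V1 × V2, |h (x1, x2) - h y|) +
           (∑ x1 : V1, ∑ x2 ∈ B2, ∑ y : V1 × V2, |h (x1, x2) - h y|)) ≤
        edgeSum (G1 □ G2) h := by
  intro h hb
  have hn1' : (0:ℝ) ≤ (Fintype.card V1 : ℝ) := Nat.cast_nonneg _
  have hn2' : (0:ℝ) ≤ (Fintype.card V2 : ℝ) := Nat.cast_nonneg _
  have hb1' : (0:ℝ) ≤ (B1.card : ℝ) := Nat.cast_nonneg _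
  have hb2' : (0:ℝ) ≤ (B2.card : ℝ) := Nat.cast_nonneg _
  have hdec := box_edgeSum G1 G2 h
  have hE1 : (0:ℝ) ≤ ∑ b : V2, edgeSum G1 (fun a => h (a, b)) :=
    Finset.sum_nonneg fun b _ => edgeSum_nonneg _ _
  have hE2 : (0:ℝ) ≤ ∑ a : V1, edgeSum G2 (fun b => h (a, b)) :=
    Finset.sum_nonneg fun a _ => edgeSum_nonneg _ _
  have F1 := fun b : V2 => funIneq_mul h1 (fun a => h (a, b)) (fun a => hb (a, b))
  have F2 := fun a : V1 => funIneq_mul h2 (fun b => h (a, b)) (fun b => hb (a, b))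
  have SA1 : C * (∑ b : V2, ∑ x1 : V1, ∑ y1 : V1, |h (x1, b) - h (y1, b)|)
      ≤ (Fintype.card V1 : ℝ) * ∑ b : V2, edgeSum G1 (fun a => h (a, b)) := by
    rw [Finset.mul_sum, Finset.mul_sum]
    exact Finset.sum_le_sum fun b _ => (F1 b).1
  have SA1b : Cb * (∑ b : V2, ∑ x1 ∈ B1, ∑ y1 : V1, |h (x1, b) - h (y1, b)|)
      ≤ (B1.card : ℝ) * ∑ b : V2, edgeSum G1 (fun a => h (a, b)) := by
    rw [Finset.mul_sum, Finset.mul_sum]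
    exact Finset.sum_le_sum fun b _ => (F1 b).2
  have SA2 : C * (∑ a : V1, ∑ x2 : V2, ∑ y2 : V2, |h (a, x2) - h (a, y2)|)
      ≤ (Fintype.card V2 : ℝ) * ∑ a : V1, edgeSum G2 (fun b => h (a, b)) := by
    rw [Finset.mul_sum, Finset.mul_sum]
    exact Finset.sum_le_sum fun a _ => (F2 a).1
  have SA2b : Cb * (∑ a : V1, ∑ x2 ∈ B2, ∑ y2 : V2, |h (a, x2) - h (a, y2)|)
      ≤ (B2.card : ℝ) * ∑ a : V1, edgeSum G2 (fun b => h (a, b)) := by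
    rw [Finset.mul_sum, Finset.mul_sum]
    exact Finset.sum_le_sum fun a _ => (F2 a).2
  -- nonnegativity of the various double/triple sums
  have hP1 : (0:ℝ) ≤ ∑ b : V2, ∑ x1 : V1, ∑ y1 : V1, |h (x1, b) - h (y1, b)| := by positivity
  have hP2 : (0:ℝ) ≤ ∑ a : V1, ∑ x2 : V2, ∑ y2 : V2, |h (a, x2) - h (a, y2)| := by positivity
  have hQ1 : (0:ℝ) ≤ ∑ b : V2, ∑ x1 ∈ B1, ∑ y1 : V1, |h (x1, b) - h (y1, b)| :=
    Finset.sum_nonneg fun b _ => Finset.sum_nonneg fun x _ =>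
      Finset.sum_nonneg fun y _ => abs_nonneg _
  have hQ2 : (0:ℝ) ≤ ∑ a : V1, ∑ x2 ∈ B2, ∑ y2 : V2, |h (a, x2) - h (a, y2)| :=
    Finset.sum_nonneg fun b _ => Finset.sum_nonneg fun x _ =>
      Finset.sum_nonneg fun y _ => abs_nonneg _
  constructor
  · -- first inequality
    have hTfix : (∑ x : V1 × V2, ∑ y : V1 × V2, |h x - h y|)
        = ∑ x1 : V1, ∑ x2 : V2, ∑ y : V1 × V2, |h (x1, x2) - h y| :=
      Fintype.sum_prod_type _
    apply coeff_div (Nat.cast_nonneg _) (edgeSum_nonneg _ _)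
    rw [hTfix, hdec]
    have hT := tri Finset.univ h
    simp only [Finset.card_univ] at hT
    have hTnn : (0:ℝ) ≤ ∑ x1 : V1, ∑ x2 : V2, ∑ y : V1 × V2, |h (x1, x2) - h y| := by
      positivity
    push_cast [Fintype.card_prod]
    rcases le_or_gt 0 C with hC | hC
    · nlinarith [mul_le_mul_of_nonneg_left hT hC,
        mul_le_mul_of_nonneg_left SA1 hn2',
        mul_le_mul_of_nonneg_left SA2 hn1']
    · nlinarith [mul_nonneg (mul_nonneg hn1' hn2') (add_nonneg hE1 hE2)]
  · -- boundary inequality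
    apply coeff_div (Nat.cast_nonneg _) (edgeSum_nonneg _ _)
    rw [hdec]
    have hS1 := tri B1 h
    have hS2 : (∑ x1 : V1, ∑ x2 ∈ B2, ∑ y : V1 × V2, |h (x1, x2) - h y|) ≤
        (Fintype.card V1 : ℝ) * (∑ a : V1, ∑ x2 ∈ B2, ∑ y2 : V2, |h (a, x2) - h (a, y2)|)
        + (B2.card : ℝ) * (∑ b : V2, ∑ x1 : V1, ∑ y1 : V1, |h (x1, b) - h (y1, b)|) := by
      have t := tri B2 (fun p : V2 × V1 => h (p.2, p.1))
      simp only at t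
      have key2 : (∑ u ∈ B2, ∑ a : V1, ∑ y : V2 × V1, |h (a, u) - h (y.2, y.1)|)
          = ∑ x1 : V1, ∑ x2 ∈ B2, ∑ y : V1 × V2, |h (x1, x2) - h y| := by
        rw [Finset.sum_comm]
        refine Finset.sum_congr rfl fun a _ => Finset.sum_congr rfl fun u _ => ?_
        exact Fintype.sum_equiv (Equiv.prodComm V2 V1) _ _ (fun y => rfl)
      rw [key2] at t
      exact t
    have hS1nn : (0:ℝ) ≤ ∑ x1 ∈ B1, ∑ x2 : V2, ∑ y : V1 × V2, |h (x1, x2) - h y| :=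
      Finset.sum_nonneg fun a _ => Finset.sum_nonneg fun b _ =>
        Finset.sum_nonneg fun y _ => abs_nonneg _
    have hS2nn : (0:ℝ) ≤ ∑ x1 : V1, ∑ x2 ∈ B2, ∑ y : V1 × V2, |h (x1, x2) - h y| :=
      Finset.sum_nonneg fun a _ => Finset.sum_nonneg fun b _ =>
        Finset.sum_nonneg fun y _ => abs_nonneg _
    push_cast
    rcases le_or_gt 0 (min C Cb) with hm | hm
    · have hmC : min C Cb ≤ C := min_le_left _ _
      have hmCb : min C Cb ≤ Cb := min_le_right _ _
      linarith [mul_le_mul_of_nonneg_left hS1 hm,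
        mul_le_mul_of_nonneg_left hS2 hm,
        mul_le_mul_of_nonneg_left SA1b hn2',
        mul_le_mul_of_nonneg_left SA2 hb1',
        mul_le_mul_of_nonneg_left SA2b hn1',
        mul_le_mul_of_nonneg_left SA1 hb2',
        mul_nonneg hn2' (mul_nonneg (sub_nonneg.mpr hmCb) hQ1),
        mul_nonneg hb1' (mul_nonneg (sub_nonneg.mpr hmC) hP2),
        mul_nonneg hn1' (mul_nonneg (sub_nonneg.mpr hmCb) hQ2),
        mul_nonneg hb2' (mul_nonneg (sub_nonneg.mpr hmC) hP1)]
    · nlinarith [mul_nonneg (add_nonneg (mul_nonneg hb1' hn2') (mul_nonneg hn1' hb2'))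
        (add_nonneg hE1 hE2), mul_nonpos_of_nonpos_of_nonneg hm.le (add_nonneg hS1nn hS2nn)]
end

section
/- Let G = (V, E, V^∂) be a finite graph with boundary satisfying the (C, C^∂)-functional inequalities for all h: V → {0,1}. Then the associated level-0 complex is a (β0 = C, η0 = C^∂·|V|/(2|V^∂|))-coboundary expander: for any f̂0 ∈ F2^V, taking f0 to be whichever of f̂0 or f̂0 + 𝟙 has smaller Hamming weight, one has |δ0 f0|_int ≥ C·|f0| and |δ0 f0|_int ≥ (C^∂|V|/(2|V^∂|))·|δ0 f0|_∂, where |δ0 f0|_int = Σ_{{x,y}∈E} |f0(x)−f0(y)| and |δ0 f0|_∂ = Σ_{x∈V^∂} 1_{f0(x)≠0}. -/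
open scoped Classical

/-- The real-valued `{0,1}` indicator of an `F2`-vector. -/
noncomputable def ind {V : Type} (f : V → ZMod 2) : V → ℝ :=
  fun v => if f v = 0 then 0 else 1

/-- `|δ0 f0|_int = Σ_{{x,y}∈E} |f0(x) − f0(y)|`. -/
noncomputable def intWeight {V : Type} [Fintype V] (G : SimpleGraph V)
    (f : V → ZMod 2) : ℝ :=
  edgeSum G (ind f)

/-- `|δ0 f0|_∂ = Σ_{x∈V∂} 1_{f0(x)≠0}`. -/
def bdWeight {V : Type} (B : Finset V) (f : V → ZMod 2) : ℕ :=
  (B.filter (fun x => f x ≠ 0)).card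

lemma ind01 {V : Type} (f : V → ZMod 2) (v : V) : ind f v = 0 ∨ ind f v = 1 := by
  unfold ind; split <;> simp

lemma abs_formula {a b : ℝ} (ha : a = 0 ∨ a = 1) (hb : b = 0 ∨ b = 1) :
    |a - b| = a + b - 2 * a * b := by
  rcases ha with ha | ha <;> rcases hb with hb | hb <;> subst ha <;> subst hb <;> norm_num

lemma sum_ind {V : Type} [Fintype V] (f : V → ZMod 2) :
    ∑ v : V, ind f v = (hammingNorm f : ℝ) := by
  rw [hammingNorm, Finset.card_filter]
  push_cast
  apply Finset.sum_congr rfl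
  intro v _
  unfold ind
  by_cases h : f v = 0 <;> simp [h]

lemma sum_ind_B {V : Type} [Fintype V] [DecidableEq V] (B : Finset V) (f : V → ZMod 2) :
    ∑ v ∈ B, ind f v = (bdWeight B f : ℝ) := by
  rw [bdWeight, Finset.card_filter]
  push_cast
  apply Finset.sum_congr rfl
  intro v _
  unfold ind
  by_cases h : f v = 0 <;> simp [h]

lemma norm_add_norm_compl {V : Type} [Fintype V] (f : V → ZMod 2) :
    hammingNorm f + hammingNorm (f + fun _ => 1 : V → ZMod 2) = Fintype.card V := by
  classical
  have key : ∀ a : ZMod 2, (a + 1 ≠ 0) = ¬ (a ≠ 0) := by decide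
  rw [hammingNorm, hammingNorm]
  simp only [Pi.add_apply, key]
  rw [Finset.card_filter_add_card_filter_not, Finset.card_univ]

/-- If a graph with boundary satisfies the (C, C∂)-functional
inequalities, then the associated level-0 complex is a
(β0 = C, η0 = C∂·|V|/(2|V∂|))-coboundary expander: taking f0 to be whichever of
f̂0, f̂0 + 𝟙 has the smaller Hamming weight, one has C·|f0| ≤ |δ0 f0|_int and
(C∂|V|/(2|V∂|))·|δ0 f0|_∂ ≤ |δ0 f0|_int. -/
theorem stmt_6 {V : Type} [Fintype V] [DecidableEq V]
    (G : SimpleGraph V) (B : Finset V) (C Cb : ℝ)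
    (hfi : FunIneq G B C Cb)
    (fhat0 f0 : V → ZMod 2)
    (hf0 : f0 = fhat0 ∨ f0 = fhat0 + fun _ => 1)
    (hmin : hammingNorm f0 ≤ hammingNorm fhat0)
    (hmin' : hammingNorm f0 ≤ hammingNorm (fhat0 + fun _ => 1)) :
    C * (hammingNorm f0 : ℝ) ≤ intWeight G f0 ∧
    (Cb * (Fintype.card V : ℝ) / (2 * (B.card : ℝ))) * (bdWeight B f0 : ℝ) ≤
      intWeight G f0 := by
  classical
  obtain ⟨H1, H2⟩ := hfi (ind f0) (ind01 f0)
  set h : V → ℝ := ind f0 with hh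
  set n : ℝ := (Fintype.card V : ℝ) with hn
  set k : ℝ := (hammingNorm f0 : ℝ) with hk
  set w : ℝ := (bdWeight B f0 : ℝ) with hw
  set b : ℝ := (B.card : ℝ) with hb
  have hI : edgeSum G h = intWeight G f0 := rfl
  rw [hI] at H1 H2
  -- nonnegativity of the interior weight
  have hint : 0 ≤ intWeight G f0 := by
    rw [intWeight, edgeSum]
    apply mul_nonneg (by norm_num)
    refine Finset.sum_nonneg fun x _ => Finset.sum_nonneg fun y _ => ?_
    split
    · exact abs_nonneg _
    · exact le_refl 0
  have hk0 : 0 ≤ k := by positivity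
  have hw0 : 0 ≤ w := by positivity
  have hn0 : 0 ≤ n := by positivity
  have hb0 : 0 ≤ b := by positivity
  -- 2k ≤ n
  have hkn : 2 * k ≤ n := by
    have hsum := norm_add_norm_compl fhat0
    have : 2 * hammingNorm f0 ≤ Fintype.card V := by omega
    calc 2 * k = ((2 * hammingNorm f0 : ℕ) : ℝ) := by push_cast; ring
    _ ≤ n := by exact_mod_cast Nat.cast_le.mpr this
  -- w ≤ b
  have hwb : w ≤ b := by
    have : bdWeight B f0 ≤ B.card := Finset.card_filter_le _ _
    rw [hw, hb]
    exact_mod_cast this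
  -- inner sum formula
  have inner : ∀ x : V, ∑ y : V, |h x - h y| = n * h x + k - 2 * h x * k := by
    intro x
    have e : ∀ y : V, |h x - h y| = h x + h y - 2 * h x * h y := fun y =>
      abs_formula (ind01 f0 x) (ind01 f0 y)
    simp_rw [e]
    rw [Finset.sum_sub_distrib, Finset.sum_add_distrib, Finset.sum_const]
    have : ∑ y : V, 2 * h x * h y = 2 * h x * ∑ y : V, h y := by
      rw [Finset.mul_sum]
    rw [this, hh, sum_ind, ← hk, nsmul_eq_mul, Finset.card_univ, ← hn]
    try ring
  have S1 : ∑ x : V, ∑ y : V, |h x - h y| = 2 * n * k - 2 * k * k := by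
    simp_rw [inner]
    rw [Finset.sum_sub_distrib, Finset.sum_add_distrib, Finset.sum_const]
    have e1 : ∑ x : V, n * h x = n * k := by
      rw [← Finset.mul_sum, hh, sum_ind, ← hk]
    have e2 : ∑ x : V, 2 * h x * k = 2 * k * k := by
      have : ∀ x : V, 2 * h x * k = (2 * k) * h x := fun x => by ring
      simp_rw [this]
      rw [← Finset.mul_sum, hh, sum_ind, ← hk]; try ring
    rw [e1, e2, nsmul_eq_mul, Finset.card_univ, ← hn]
    try ring
  have SB : ∑ x ∈ B, ∑ y : V, |h x - h y| = n * w + b * k - 2 * w * k := by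
    simp_rw [inner]
    rw [Finset.sum_sub_distrib, Finset.sum_add_distrib, Finset.sum_const]
    have e1 : ∑ x ∈ B, n * h x = n * w := by
      rw [← Finset.mul_sum, hh, sum_ind_B, ← hw]
    have e2 : ∑ x ∈ B, 2 * h x * k = 2 * w * k := by
      have : ∀ x : V, 2 * h x * k = (2 * k) * h x := fun x => by ring
      simp_rw [this]
      rw [← Finset.mul_sum, hh, sum_ind_B, ← hw]; try ring
    rw [e1, e2, nsmul_eq_mul, ← hb]
    try ring
  rw [S1] at H1
  rw [SB] at H2
  constructor
  · -- first inequality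
    rcases le_or_gt C 0 with hC | hC
    · exact le_trans (mul_nonpos_of_nonpos_of_nonneg hC hk0) hint
    rcases eq_or_lt_of_le hn0 with hn1 | hn1
    · -- n = 0, so k = 0
      have hk1 : k = 0 := by linarith
      rw [hk1, mul_zero]; exact hint
    · refine le_trans ?_ H1
      have hdiv : 0 ≤ C / n := div_nonneg hC.le hn0
      have hn' : n ≠ 0 := ne_of_gt hn1
      have : C * k = (C / n) * (n * k) := by field_simp
      rw [this]
      apply mul_le_mul_of_nonneg_left _ hdiv
      nlinarith [mul_nonneg hk0 (by linarith : (0:ℝ) ≤ n - 2 * k)]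
  · -- second inequality
    rcases le_or_gt Cb 0 with hCb | hCb
    · refine le_trans ?_ hint
      apply mul_nonpos_of_nonpos_of_nonneg _ hw0
      apply div_nonpos_of_nonpos_of_nonneg (mul_nonpos_of_nonpos_of_nonneg hCb hn0)
      linarith
    rcases eq_or_lt_of_le hb0 with hb1 | hb1
    · -- b = 0, so w = 0
      have hw1 : w = 0 := by linarith
      rw [hw1, mul_zero]; exact hint
    · refine le_trans ?_ H2
      have hdiv : 0 ≤ Cb / b := div_nonneg hCb.le hb0
      have hb' : b ≠ 0 := ne_of_gt hb1
      have : Cb * n / (2 * b) * w = (Cb / b) * (n * w / 2) := by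
        field_simp
      rw [this]
      apply mul_le_mul_of_nonneg_left _ hdiv
      nlinarith [mul_nonneg hw0 (by linarith : (0:ℝ) ≤ n - 2 * k),
        mul_nonneg hk0 (by linarith : (0:ℝ) ≤ b - w)]
end

section
/- For the generalized repetition code of length L with Δ ≥ 2 branches, for any f̂0 ∈ F2^{Y(0)} with |f̂0| ≤ |Y(0)|/2, if the number of violated interior checks satisfies |δ0 f̂0|_int < Δ/2, then |f̂0| ≤ (L/2)·|δ0 f̂0|_int. -/
namespace Stmt10

variable {Δ n : ℕ}

def bw (f : RepV Δ n → ZMod 2) (b : Fin Δ) : ℕ :=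
  (Finset.univ.filter fun j : Fin (n+1) => f (some (b, j)) ≠ 0).card

def bc (f : RepV Δ n → ZMod 2) (b : Fin Δ) : ℕ :=
  (Finset.univ.filter fun j : Fin (n+1) => f (some (b, j)) ≠ f (repPrev (b, j))).card

lemma repInt_eq_sum (f : RepV Δ n → ZMod 2) : repInt f = ∑ b, bc f b := by
  unfold repInt bc
  rw [Finset.card_filter, Fintype.sum_prod_type]
  refine Finset.sum_congr rfl fun b _ => ?_
  rw [Finset.card_filter]

lemma norm_eq (f : RepV Δ n → ZMod 2) :
    hammingNorm f = (if f none ≠ 0 then 1 else 0) + ∑ b, bw f b := by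
  unfold hammingNorm bw
  rw [Finset.card_filter, Fintype.sum_option, Fintype.sum_prod_type]
  congr 1
  refine Finset.sum_congr rfl fun b _ => ?_
  rw [Finset.card_filter]

lemma clean (f : RepV Δ n → ZMod 2) (b : Fin Δ) (h : bc f b = 0) :
    ∀ j : Fin (n+1), f (some (b, j)) = f none := by
  have h' : ∀ j : Fin (n+1), f (some (b, j)) = f (repPrev (b, j)) := by
    intro j
    by_contra hj
    have hmem : j ∈ (Finset.univ.filter fun j : Fin (n+1) =>
        f (some (b, j)) ≠ f (repPrev (b, j))) := by simp [hj]
    rw [Finset.card_eq_zero.mp h] at hmem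
    exact absurd hmem (Finset.notMem_empty j)
  suffices H : ∀ m (hm : m < n+1), f (some (b, ⟨m, hm⟩)) = f none by
    intro j; exact H j.1 j.2
  intro m
  induction m with
  | zero => intro hm; rw [h' ⟨0, hm⟩]; simp [repPrev]
  | succ k ih =>
    intro hm
    rw [h' ⟨k+1, hm⟩]
    have hp : repPrev (b, (⟨k+1, hm⟩ : Fin (n+1))) = some (b, ⟨k, by omega⟩) := by
      simp [repPrev]
    rw [hp, ih (by omega)]

end Stmt10

/-- For the generalized repetition code of length L with Δ ≥ 2 branches,
if |f̂0| ≤ |Y(0)|/2 and the number of violated interior checks is < Δ/2, then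
|f̂0| ≤ (L/2)·|δ0 f̂0|_int. -/
theorem stmt_10 (Δ n : ℕ) (hΔ : 2 ≤ Δ) (L : ℕ) (hL : L = 2 * n + 3)
    (fhat0 : RepV Δ n → ZMod 2)
    (hwt : 2 * hammingNorm fhat0 ≤ Fintype.card (RepV Δ n))
    (hint : (repInt fhat0 : ℝ) < (Δ : ℝ) / 2) :
    (hammingNorm fhat0 : ℝ) ≤ ((L : ℝ) / 2) * (repInt fhat0 : ℝ) := by
  open Stmt10 in
  set f := fhat0
  set k := repInt f with hk
  -- from hint : 2k + 1 ≤ Δ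
  have hkΔ : 2 * k + 1 ≤ Δ := by
    have : (2 * k : ℝ) < Δ := by push_cast; linarith
    exact_mod_cast by exact_mod_cast Nat.lt_iff_add_one_le.mp (by exact_mod_cast this)
  have hcard : Fintype.card (RepV Δ n) = Δ * (n+1) + 1 := by
    simp [Fintype.card_option, Fintype.card_prod]
  -- number of dirty branches ≤ k
  have hsum : k = ∑ b, bc f b := repInt_eq_sum f
  have hdirty : (Finset.univ.filter fun b : Fin Δ => ¬ bc f b = 0).card ≤ k := by
    rw [hsum]
    calc (Finset.univ.filter fun b : Fin Δ => ¬ bc f b = 0).card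
        = ∑ _b ∈ Finset.univ.filter (fun b : Fin Δ => ¬ bc f b = 0), 1 :=
          Finset.card_eq_sum_ones _
      _ ≤ ∑ b ∈ Finset.univ.filter (fun b : Fin Δ => ¬ bc f b = 0), bc f b := by
          refine Finset.sum_le_sum fun b hb => ?_
          have := (Finset.mem_filter.mp hb).2
          omega
      _ ≤ ∑ b, bc f b := Finset.sum_le_sum_of_subset (Finset.filter_subset _ _)
  -- root is 0
  have hroot : f none = 0 := by
    by_contra h0
    set S := Finset.univ.filter fun b : Fin Δ => bc f b = 0 with hS
    have hScard : Δ ≤ S.card + k := by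
      have := Finset.card_filter_add_card_filter_not
        (s := (Finset.univ : Finset (Fin Δ))) (p := fun b => bc f b = 0)
      simp only [Finset.card_univ, Fintype.card_fin] at this
      rw [hS]
      omega
    have hbwS : ∀ b ∈ S, bw f b = n + 1 := by
      intro b hb
      have hb0 : bc f b = 0 := (Finset.mem_filter.mp hb).2
      unfold bw
      rw [Finset.filter_true_of_mem, Finset.card_univ, Fintype.card_fin]
      intro j _
      rw [clean f b hb0 j]; exact h0
    have hlow : S.card * (n+1) + 1 ≤ hammingNorm f := by
      rw [norm_eq f, if_pos h0]
      have : ∑ b ∈ S, bw f b ≤ ∑ b, bw f b :=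
        Finset.sum_le_sum_of_subset (Finset.filter_subset _ _)
      have h2 : ∑ b ∈ S, bw f b = S.card * (n+1) := by
        rw [Finset.sum_congr rfl hbwS, Finset.sum_const, smul_eq_mul]
      omega
    rw [hcard] at hwt
    -- 2*(S.card*(n+1)+1) ≤ Δ*(n+1)+1, Δ ≤ S.card + k, 2k+1 ≤ Δ
    nlinarith [hlow, hwt, hScard, hkΔ, Nat.le_refl (n+1)]
  -- each branch weight ≤ (n+1) * bc
  have hbranch : ∀ b : Fin Δ, bw f b ≤ (n+1) * bc f b := by
    intro b
    rcases Nat.eq_zero_or_pos (bc f b) with h0 | hpos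
    · have : bw f b = 0 := by
        unfold bw
        rw [Finset.card_eq_zero, Finset.filter_eq_empty_iff]
        intro j _
        rw [clean f b h0 j, hroot]
        simp
      omega
    · have : bw f b ≤ n + 1 := by
        calc bw f b ≤ (Finset.univ : Finset (Fin (n+1))).card := Finset.card_filter_le _ _
          _ = n + 1 := by simp
      nlinarith
  have hfinal : hammingNorm f ≤ (n+1) * k := by
    rw [norm_eq f, if_neg (by simp [hroot]), Nat.zero_add, hsum, Finset.mul_sum]
    exact Finset.sum_le_sum fun b _ => hbranch b
  have : (hammingNorm f : ℝ) ≤ ((n:ℝ)+1) * k := by exact_mod_cast hfinal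
  have hk0 : (0:ℝ) ≤ (k:ℝ) := Nat.cast_nonneg k
  rw [hL]
  push_cast
  nlinarith
end

section
/- Let Cay(A, G) be the Cayley graph of a finite group G with generating set A acting by left multiplication (vertices G, edges {g, ag}), with right G-action g·x = xg^{-1}, and Cay(G, B) the Cayley graph with generating set B acting by right multiplication (edges {g, gb}), with left G-action g·y = gy. Then the map [(x, y)] ↦ xy is a well-defined bijection from the G-orbits of V(Cay(A,G)) × V(Cay(G,B)) under the diagonal action to G, and it identifies the balanced product square complex Cay(A,G) ×_G Cay(G,B) with the left-right Cayley complex Cay²(A, G, B): orbits of horizontal edges correspond to pairs {g, ag}, orbits of vertical edges to pairs {g, gb}, and orbits of squares to quadruples (g, ag, gb, agb). -/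
/-- For a finite group G with symmetric generating sets A and B, the
map [(x, y)] ↦ x*y is a well-defined bijection from the orbits of G × G under the
diagonal action g·(x,y) = (x g⁻¹, g y) to G (identifying the balanced product
Cay(A,G) ×_G Cay(G,B) with the left-right Cayley complex Cay²(A,G,B)); it sends
orbits of horizontal edges to pairs {g, ag}, orbits of vertical edges to pairs
{g, gb}, and orbits of squares to quadruples (g, ag, gb, agb). -/
theorem stmt_13 {G : Type} [Group G] [Fintype G] (A B : Set G)
    (hAsymm : ∀ a ∈ A, a⁻¹ ∈ A) (hBsymm : ∀ b ∈ B, b⁻¹ ∈ B)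
    (hAgen : Subgroup.closure A = ⊤) (hBgen : Subgroup.closure B = ⊤) :
    -- [(x,y)] ↦ x*y is well-defined and injective on diagonal orbits:
    -- two pairs lie in the same orbit iff they have the same product
    (∀ p q : G × G,
      (∃ g : G, q = (p.1 * g⁻¹, g * p.2)) ↔ p.1 * p.2 = q.1 * q.2) ∧
    -- and it is surjective onto the vertices G of Cay²(A,G,B)
    (Function.Surjective fun p : G × G => p.1 * p.2) ∧
    -- orbits of horizontal edges {x, ax} × {y} map to horizontal edges {g, ag}
    (∀ (x y : G), ∀ a ∈ A, (a * x) * y = a * (x * y)) ∧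
    -- orbits of vertical edges {x} × {y, yb} map to vertical edges {g, gb}
    (∀ (x y : G), ∀ b ∈ B, x * (y * b) = (x * y) * b) ∧
    -- orbits of squares map to squares (g, ag, gb, agb) with g = xy
    (∀ (x y : G), ∀ a ∈ A, ∀ b ∈ B,
      (x * y, (a * x) * y, x * (y * b), (a * x) * (y * b)) =
        (x * y, a * (x * y), (x * y) * b, a * ((x * y) * b))) := by
  refine ⟨?_, ?_, ?_, ?_, ?_⟩
  · intro p q
    constructor
    · rintro ⟨g, rfl⟩; group
    · intro h
      refine ⟨q.2 * p.2⁻¹, ?_⟩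
      have h1 : q.1 = p.1 * p.2 * q.2⁻¹ := by
        rw [h]; group
      ext
      · simp [h1]; group
      · group
  · intro g; exact ⟨(g, 1), by simp⟩
  · intro x y a _; group
  · intro x y b _; group
  · intro x y a _ b _; simp [mul_assoc]
end

section
/- Let X be a classical code complex δ0: F2^{X(0)} → F2^{X(1)} with soundness s_LTC, i.e., for all c̃0 there is a codeword h̃0 ∈ ker δ0 with (s_LTC/|X(0)|)|c̃0 − h̃0| ≤ (1/|X(1)|)|δ0 c̃0|. Let the subdivided complex X_L with injective chain maps F0, F1 (F1 δ0 = δ0' F0, F1 weight-preserving, F0 repeating each coordinate between L and (Δ_max/2)L times) be given, and suppose the generalized repetition pieces give a (β^rep, η^rep)-cleaning: for every c0 ∈ F2^{X_L(0)} there is c0^T with c0 + c0^T ∈ im F0, β^rep|c0^T| ≤ |δ0' c0| and η^rep·|δ0'(c0+c0^T)| ≤ |δ0' c0|. Then X_L has soundness s satisfying for all c0 the existence of a codeword h0 ∈ ker δ0' with |c0 − h0| ≤ (1/β^rep + (1/η^rep)·(|X(0)|/|X(1)|)·(1/s_LTC)·(Δ_max/2)·L)·|δ0' c0|. -/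
/-!
Clean `c₀` to `c₀ + c₀ᵀ = F₀ c̃₀`, take a codeword `h̃₀` of `X` close to `c̃₀` by soundness of `X`,
and use `h₀ = F₀ h̃₀`, a codeword of `X_L` by the chain-map identity.  Then
`c₀ - h₀ = F₀ (c̃₀ - h̃₀) - c₀ᵀ`: the cleaning bounds `|c₀ᵀ|`, while `F₀` stretches
`|c̃₀ - h̃₀|` by at most `(Δmax/2)·L`, soundness of `X` bounds `|c̃₀ - h̃₀|` by `|δ₀ c̃₀|`, and
`|δ₀ c̃₀| = |F₁ δ₀ c̃₀| = |δ₀' (c₀ + c₀ᵀ)|` is controlled by the cleaning.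
-/

section Hamming

variable {ι : Type*} [Fintype ι] {β : ι → Type*} [∀ i, DecidableEq (β i)]

theorem hammingNorm_sub_le [∀ i, AddGroup (β i)] (x y : ∀ i, β i) :
    hammingNorm (x - y) ≤ hammingNorm x + hammingNorm y := by
  have hdist : hammingNorm (x - y) = hammingDist x y := by
    simp only [hammingNorm, hammingDist, Pi.sub_apply, ne_eq, sub_eq_zero]
  calc hammingNorm (x - y) = hammingDist x y := hdist
    _ ≤ hammingDist x 0 + hammingDist 0 y := hammingDist_triangle x 0 y
    _ = hammingNorm x + hammingNorm y := by
      rw [hammingDist_zero_right, hammingDist_zero_left]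

/-- For empty `ι` the hypothesis reads `s / 0 * 0 ≤ r` and the bound is `0 ≤ 0 / s * r`. -/
theorem hammingNorm_le_of_soundness [∀ i, Zero (β i)] {s r : ℝ} (hs : 0 < s) (x : ∀ i, β i)
    (h : s / Fintype.card ι * hammingNorm x ≤ r) :
    (hammingNorm x : ℝ) ≤ Fintype.card ι / s * r := by
  rcases (Fintype.card ι).eq_zero_or_pos with hcard | hcard
  · have : hammingNorm x = 0 := Nat.le_zero.mp (hcard ▸ hammingNorm_le_card_fintype)
    simp [this, hcard]
  · have hcard' : (0 : ℝ) < Fintype.card ι := by exact_mod_cast hcard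
    rw [div_mul_eq_mul_div, div_le_iff₀ hcard'] at h
    rw [div_mul_eq_mul_div, le_div_iff₀ hs]
    linarith

end Hamming

theorem stmt_18_general {X0 X1 XL0 XL1 : Type}
    [Fintype X0] [Fintype X1] [Fintype XL0] [Fintype XL1]
    (δ0 : (X0 → ZMod 2) →ₗ[ZMod 2] (X1 → ZMod 2))
    (δ0' : (XL0 → ZMod 2) →ₗ[ZMod 2] (XL1 → ZMod 2))
    (F0 : (X0 → ZMod 2) →ₗ[ZMod 2] (XL0 → ZMod 2))
    (F1 : (X1 → ZMod 2) →ₗ[ZMod 2] (XL1 → ZMod 2))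
    (hcomm : F1 ∘ₗ δ0 = δ0' ∘ₗ F0)
    (sLTC βrep ηrep Δmax L : ℝ)
    (hs : 0 < sLTC) (hβ : 0 < βrep) (hη : 0 < ηrep) (hΔ : 0 < Δmax) (hLpos : 0 < L)
    -- F1 is weight-preserving
    (hF1w : ∀ v : X1 → ZMod 2, hammingNorm (F1 v) = hammingNorm v)
    -- F0 repeats each coordinate between L and (Δmax/2)·L times
    (hF0hi : ∀ w : X0 → ZMod 2,
      (hammingNorm (F0 w) : ℝ) ≤ (Δmax / 2) * L * (hammingNorm w : ℝ))
    -- soundness of X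
    (hsound : ∀ c0 : X0 → ZMod 2, ∃ h0 : X0 → ZMod 2, δ0 h0 = 0 ∧
      (sLTC / (Fintype.card X0 : ℝ)) * (hammingNorm (c0 - h0) : ℝ) ≤
        (1 / (Fintype.card X1 : ℝ)) * (hammingNorm (δ0 c0) : ℝ))
    -- (β_rep, η_rep)-cleaning from the generalized repetition pieces
    (hclean : ∀ c0 : XL0 → ZMod 2, ∃ c0T : XL0 → ZMod 2,
      (c0 + c0T) ∈ LinearMap.range F0 ∧
      βrep * (hammingNorm c0T : ℝ) ≤ (hammingNorm (δ0' c0) : ℝ) ∧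
      ηrep * (hammingNorm (δ0' (c0 + c0T)) : ℝ) ≤ (hammingNorm (δ0' c0) : ℝ)) :
    ∀ c0 : XL0 → ZMod 2, ∃ h0 : XL0 → ZMod 2, δ0' h0 = 0 ∧
      (hammingNorm (c0 - h0) : ℝ) ≤
        (1 / βrep + (1 / ηrep) * ((Fintype.card X0 : ℝ) / (Fintype.card X1 : ℝ)) *
          (1 / sLTC) * (Δmax / 2) * L) * (hammingNorm (δ0' c0) : ℝ) := by
  intro c0
  obtain ⟨c0T, ⟨ct, hct⟩, hβc, hηc⟩ := hclean c0
  obtain ⟨ht, hker, hsnd⟩ := hsound ct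
  have hδF0 (w : X0 → ZMod 2) : δ0' (F0 w) = F1 (δ0 w) := (LinearMap.congr_fun hcomm w).symm
  refine ⟨F0 ht, by rw [hδF0, hker, map_zero], ?_⟩
  have hdecomp : c0 - F0 ht = F0 (ct - ht) - c0T := by rw [map_sub, hct]; abel
  have hsyndrome : (hammingNorm (δ0 ct) : ℝ) ≤ hammingNorm (δ0' c0) / ηrep := by
    rw [← hF1w, ← hδF0, hct, le_div_iff₀' hη]; exact hηc
  have hD : 0 ≤ Δmax / 2 * L := by positivity
  calc (hammingNorm (c0 - F0 ht) : ℝ)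
      ≤ hammingNorm (F0 (ct - ht)) + hammingNorm c0T := by
        rw [hdecomp]; exact_mod_cast hammingNorm_sub_le _ _
    _ ≤ Δmax / 2 * L * (Fintype.card X0 / sLTC * (1 / Fintype.card X1 *
          (hammingNorm (δ0' c0) / ηrep))) + hammingNorm (δ0' c0) / βrep := by
        gcongr
        · refine (hF0hi _).trans (mul_le_mul_of_nonneg_left ?_ hD)
          exact (hammingNorm_le_of_soundness hs _ hsnd).trans (by gcongr)
        · rw [le_div_iff₀' hβ]; exact hβc
    _ = _ := by ring

/-- Soundness of the subdivided classical code.  If X (parity-check map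
δ0) has soundness s_LTC, the chain maps F0, F1 satisfy F1 δ0 = δ0' F0 with F1
weight-preserving and F0 repeating each coordinate between L and (Δmax/2)·L times,
and the generalized repetition pieces of X_L admit a (β_rep, η_rep)-cleaning, then
for every c0 there is a codeword h0 ∈ ker δ0' with
|c0 − h0| ≤ (1/β_rep + (1/η_rep)·(|X(0)|/|X(1)|)·(1/s_LTC)·(Δmax/2)·L)·|δ0' c0|. -/
theorem stmt_18 {X0 X1 XL0 XL1 : Type}
    [Fintype X0] [Fintype X1] [Fintype XL0] [Fintype XL1]
    (δ0 : (X0 → ZMod 2) →ₗ[ZMod 2] (X1 → ZMod 2))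
    (δ0' : (XL0 → ZMod 2) →ₗ[ZMod 2] (XL1 → ZMod 2))
    (F0 : (X0 → ZMod 2) →ₗ[ZMod 2] (XL0 → ZMod 2))
    (F1 : (X1 → ZMod 2) →ₗ[ZMod 2] (XL1 → ZMod 2))
    (hF0inj : Function.Injective F0) (hF1inj : Function.Injective F1)
    (hcomm : F1 ∘ₗ δ0 = δ0' ∘ₗ F0)
    (sLTC βrep ηrep Δmax L : ℝ)
    (hs : 0 < sLTC) (hβ : 0 < βrep) (hη : 0 < ηrep) (hΔ : 0 < Δmax) (hLpos : 0 < L)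
    -- F1 is weight-preserving
    (hF1w : ∀ v : X1 → ZMod 2, hammingNorm (F1 v) = hammingNorm v)
    -- F0 repeats each coordinate between L and (Δmax/2)·L times
    (hF0lo : ∀ w : X0 → ZMod 2, L * (hammingNorm w : ℝ) ≤ (hammingNorm (F0 w) : ℝ))
    (hF0hi : ∀ w : X0 → ZMod 2,
      (hammingNorm (F0 w) : ℝ) ≤ (Δmax / 2) * L * (hammingNorm w : ℝ))
    -- soundness of X
    (hsound : ∀ c0 : X0 → ZMod 2, ∃ h0 : X0 → ZMod 2, δ0 h0 = 0 ∧
      (sLTC / (Fintype.card X0 : ℝ)) * (hammingNorm (c0 - h0) : ℝ) ≤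
        (1 / (Fintype.card X1 : ℝ)) * (hammingNorm (δ0 c0) : ℝ))
    -- (β_rep, η_rep)-cleaning from the generalized repetition pieces
    (hclean : ∀ c0 : XL0 → ZMod 2, ∃ c0T : XL0 → ZMod 2,
      (c0 + c0T) ∈ LinearMap.range F0 ∧
      βrep * (hammingNorm c0T : ℝ) ≤ (hammingNorm (δ0' c0) : ℝ) ∧
      ηrep * (hammingNorm (δ0' (c0 + c0T)) : ℝ) ≤ (hammingNorm (δ0' c0) : ℝ)) :
    ∀ c0 : XL0 → ZMod 2, ∃ h0 : XL0 → ZMod 2, δ0' h0 = 0 ∧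
      (hammingNorm (c0 - h0) : ℝ) ≤
        (1 / βrep + (1 / ηrep) * ((Fintype.card X0 : ℝ) / (Fintype.card X1 : ℝ)) *
          (1 / sLTC) * (Δmax / 2) * L) * (hammingNorm (δ0' c0) : ℝ) :=
  stmt_18_general δ0 δ0' F0 F1 hcomm sLTC βrep ηrep Δmax L hs hβ hη hΔ hLpos hF1w hF0hi hsound
    hclean
end
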